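/- arXiv:2204.10950 — 2 statements merged into one kernel-verified Lean document; each statement's English description precedes it below -/
import Mathlib

section
/- Let B be a sixth-power-free integer and P = (a,b) a non-torsion integral point on y² = x³ + B with ord_2(a) = 1 and ord_2(b) = 1. Then [4]P is not an integral point. -/
/-- The Mordell curve `y² = x³ + B` as a Weierstrass curve over `ℚ`. -/
def Mordell (B : ℚ) : WeierstrassCurve.Affine ℚ :=
  { a₁ := 0, a₂ := 0, a₃ := 0, a₄ := 0, a₆ := B }

/-- `B` is sixth-power-free: no sixth power of a prime divides it. -/
def SixthPowerFree (B : ℤ) : Prop := ∀ p : ℕ, p.Prime → ¬ ((p : ℤ) ^ 6 ∣ B)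

/-- A rational point on the Mordell curve is integral if it is affine with
integer coordinates. -/
def IsIntegralPoint {B : ℚ} (P : (Mordell B).Point) : Prop :=
  ∃ (x y : ℚ) (h : (Mordell B).Nonsingular x y),
    P = WeierstrassCurve.Affine.Point.some _ _ h ∧ x.den = 1 ∧ y.den = 1

/-!
Write `P = (2a', 2b')` with `a'`, `b'` odd. Then `x([2]P) = U / V` with
`U = a'(9a'³ - 4b'²)` and `V = b'²` both odd, and the doubling formula applied to `[2]P` gives
`x([4]P) · 4V(U³ + BV³) = U(U³ - 8BV³)`: the right side is odd, while the left side is even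
as soon as `x([4]P)` is an integer.
-/

open WeierstrassCurve.Affine WeierstrassCurve.Affine.Point

lemma Int.exists_eq_two_mul_odd_of_padicValInt_eq_one {a : ℤ} (ha : padicValInt 2 a = 1) :
    ∃ c, a = 2 * c ∧ Odd c := by
  obtain ⟨c, rfl⟩ : (2 : ℤ) ∣ a := by
    simpa using (padicValInt_dvd_iff (p := 2) 1 a).mpr (Or.inr ha.ge)
  refine ⟨c, rfl, Int.not_even_iff_odd.mp ?_⟩
  rintro ⟨d, rfl⟩
  rcases (padicValInt_dvd_iff (p := 2) 2 (2 * (d + d))).mp ⟨d, by ring⟩ with h | h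
  · simp [h] at ha
  · omega

namespace Mordell

/-- The `x`-coordinate of `[2](x, y)` on any Mordell curve; meaningful only for `y ≠ 0`. -/
def doubleX (x y : ℚ) : ℚ := (3 * x ^ 2 / (2 * y)) ^ 2 - 2 * x

lemma doubleX_two_mul {a b : ℚ} (hb : b ≠ 0) :
    doubleX (2 * a) (2 * b) = a * (9 * a ^ 3 - 4 * b ^ 2) / b ^ 2 := by
  rw [doubleX]
  field_simp
  ring

lemma doubleX_mul {B x y : ℚ} (hy : y ≠ 0) (hxy : y ^ 2 = x ^ 3 + B) :
    doubleX x y * (4 * (x ^ 3 + B)) = x * (x ^ 3 - 8 * B) := by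
  rw [← hxy, doubleX]
  field_simp
  rw [hxy]
  ring

lemma doubleX_den_ne_one {B U V : ℤ} (hU : Odd U) (hV : Odd V) {x y : ℚ}
    (hx : x = U / V) (hy : y ≠ 0) (hxy : y ^ 2 = x ^ 3 + B) : (doubleX x y).den ≠ 1 := by
  subst hx
  intro hden
  set n := (doubleX ((U : ℚ) / V) y).num
  have hn : doubleX ((U : ℚ) / V) y = n := (Rat.coe_int_num_of_den_eq_one hden).symm
  have hV0 : (V : ℚ) ≠ 0 := by exact_mod_cast (show V ≠ 0 by rintro rfl; simp at hV)
  have key : n * (4 * (U ^ 3 + B * V ^ 3) * V) = U * (U ^ 3 - 8 * B * V ^ 3) := by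
    have h := doubleX_mul hy hxy
    rw [hn] at h
    field_simp at h
    have : (n : ℚ) * (4 * (U ^ 3 + B * V ^ 3) * V) = U * (U ^ 3 - 8 * B * V ^ 3) := by
      linear_combination h
    exact_mod_cast this
  have hodd : Odd (U * (U ^ 3 - 8 * B * V ^ 3)) :=
    hU.mul (hU.pow.sub_even ⟨4 * B * V ^ 3, by ring⟩)
  rw [← key] at hodd
  exact Int.not_even_iff_odd.mpr hodd ⟨n * (2 * (U ^ 3 + B * V ^ 3) * V), by ring⟩

section Point

variable {B x y : ℚ}

lemma negY_eq (x y : ℚ) : (Mordell B).negY x y = -y := by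
  simp [Mordell, negY]

lemma sq_eq_of_nonsingular (h : (Mordell B).Nonsingular x y) : y ^ 2 = x ^ 3 + B := by
  have := (equation_iff x y).mp h.1
  simp only [Mordell] at this
  linear_combination this

lemma two_zsmul_some_of_Y_eq_zero (h : (Mordell B).Nonsingular x y) (hy : y = 0) :
    (2 : ℤ) • some _ _ h = 0 := by
  rw [two_zsmul, add_self_of_Y_eq (by rw [negY_eq, hy, _root_.neg_zero])]

lemma two_zsmul_some_of_Y_ne_zero (h : (Mordell B).Nonsingular x y) (hy : y ≠ 0) :
    ∃ (y' : ℚ) (h' : (Mordell B).Nonsingular (doubleX x y) y'),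
      (2 : ℤ) • some _ _ h = some _ _ h' := by
  have hy' : y ≠ (Mordell B).negY x y := by
    rw [negY_eq]
    exact fun h => hy (by linarith)
  have hx : (Mordell B).addX x x ((Mordell B).slope x x y y) = doubleX x y := by
    rw [slope_of_Y_ne rfl hy', negY_eq]
    simp only [Mordell, addX, doubleX]
    ring
  rw [two_zsmul, add_self_of_Y_ne hy']
  exact ⟨_, hx ▸ nonsingular_add h h fun hxy => hy' hxy.2, by simp only [hx]⟩

end Point

end Mordell

theorem stmt_3_general (B a b : ℤ)
    (h : (Mordell B).Nonsingular (a : ℚ) (b : ℚ))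
    (ha2 : padicValInt 2 a = 1) (hb2 : padicValInt 2 b = 1) :
    ¬ IsIntegralPoint ((4 : ℤ) • WeierstrassCurve.Affine.Point.some _ _ h) := by
  obtain ⟨a, rfl, ha⟩ := Int.exists_eq_two_mul_odd_of_padicValInt_eq_one ha2
  obtain ⟨b, rfl, hb⟩ := Int.exists_eq_two_mul_odd_of_padicValInt_eq_one hb2
  rintro ⟨x, y, h4, h4P, hx, -⟩
  have hb0 : (b : ℚ) ≠ 0 := by exact_mod_cast (show b ≠ 0 by rintro rfl; simp at hb)
  obtain ⟨v, h2, h2P⟩ := Mordell.two_zsmul_some_of_Y_ne_zero h (by push_cast; positivity)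
  rw [show (4 : ℤ) = 2 * 2 from rfl, mul_zsmul, h2P] at h4P
  by_cases hv : v = 0
  · rw [Mordell.two_zsmul_some_of_Y_eq_zero h2 hv] at h4P
    exact some_ne_zero h4 h4P.symm
  obtain ⟨w, h4', h4'P⟩ := Mordell.two_zsmul_some_of_Y_ne_zero h2 hv
  rw [h4'P, some.injEq] at h4P
  have hU : Odd (a * (9 * a ^ 3 - 4 * b ^ 2)) :=
    ha.mul ((Odd.mul (by decide) ha.pow).sub_even ⟨2 * b ^ 2, by ring⟩)
  refine Mordell.doubleX_den_ne_one hU (hb.pow (n := 2)) ?_ hv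
    (Mordell.sq_eq_of_nonsingular h2) (by rwa [h4P.1])
  push_cast
  exact Mordell.doubleX_two_mul hb0

theorem stmt_3 (B a b : ℤ) (hB : B ≠ 0) (hB6 : SixthPowerFree B)
    (h : (Mordell B).Nonsingular (a : ℚ) (b : ℚ))
    (htor : ∀ n : ℤ, n ≠ 0 → n • WeierstrassCurve.Affine.Point.some _ _ h ≠ 0)
    (ha2 : padicValInt 2 a = 1) (hb2 : padicValInt 2 b = 1) :
    ¬ IsIntegralPoint ((4 : ℤ) • WeierstrassCurve.Affine.Point.some _ _ h) :=
  stmt_3_general B a b h ha2 hb2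
end

section
/- Let B be a sixth-power-free integer and P = (a,b) a non-torsion integral point on y² = x³ + B such that [3]P is integral. If p > 3 is a prime dividing both B and a, then ord_p(a) < ord_p(B). -/
/-!
Suppose `v_p(a) ≥ v_p(B) = n ≥ 1` and write `a = pⁿ a₀`, `B = pⁿ B₀` with `p ∤ B₀`. Then
`p^(4n)` divides `ψ₃(P)² = (3a(a³ + 4B))²`, whereas `φ₃(P) = p^(3n) (64 B₀³ + pⁿ c)` is not divisible
by `p^(3n+1)` because `p ≠ 2`. So `ψ₃(P)²` does not divide `φ₃(P)`, which contradicts the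
integrality of `x([3]P) = φ₃(P) / ψ₃(P)²`. The same substitution shows `b² = a³ + B ≠ 0`, so `P` is
not `2`-torsion and the triplication formula applies.
-/

namespace Mordell

def psi3 {R : Type*} [CommRing R] (a B : R) : R := 3 * a * (a ^ 3 + 4 * B)

def phi3 {R : Type*} [CommRing R] (a B : R) : R :=
  a ^ 9 - 96 * B * a ^ 6 + 48 * B ^ 2 * a ^ 3 + 64 * B ^ 3

@[simp, norm_cast]
lemma intCast_psi3 {R : Type*} [CommRing R] (a B : ℤ) : ((psi3 a B : ℤ) : R) = psi3 (a : R) B := by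
  simp [psi3]

@[simp, norm_cast]
lemma intCast_phi3 {R : Type*} [CommRing R] (a B : ℤ) : ((phi3 a B : ℤ) : R) = phi3 (a : R) B := by
  simp [phi3]

section Valuation

variable {R : Type*} [CommRing R] [IsDomain R] {p a₀ B₀ : R} {n : ℕ}

lemma pow_mul_cube_add_pow_mul_ne_zero (hp : Prime p) (hn : n ≠ 0) (hB₀ : ¬ p ∣ B₀) :
    (p ^ n * a₀) ^ 3 + p ^ n * B₀ ≠ 0 := by
  rw [show (p ^ n * a₀) ^ 3 + p ^ n * B₀ = p ^ n * (p ^ (2 * n) * a₀ ^ 3 + B₀) by ring]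
  refine mul_ne_zero (pow_ne_zero _ hp.ne_zero) fun h0 => hB₀ ?_
  have hp_dvd : p ∣ p ^ (2 * n) * a₀ ^ 3 := (dvd_pow_self p (by omega)).mul_right _
  exact (dvd_add_right hp_dvd).mp (h0 ▸ dvd_zero p)

lemma not_psi3_sq_dvd_phi3 (hp : Prime p) (hp2 : ¬ p ∣ 2) (hn : n ≠ 0) (hB₀ : ¬ p ∣ B₀) :
    ¬ psi3 (p ^ n * a₀) (p ^ n * B₀) ^ 2 ∣ phi3 (p ^ n * a₀) (p ^ n * B₀) := by
  have hpsi : psi3 (p ^ n * a₀) (p ^ n * B₀) ^ 2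
      = p ^ (3 * n) * (p ^ n * (3 * a₀ * (p ^ (2 * n) * a₀ ^ 3 + 4 * B₀)) ^ 2) := by
    unfold psi3; ring
  have hphi : phi3 (p ^ n * a₀) (p ^ n * B₀) = p ^ (3 * n) * (p ^ n *
      (p ^ (5 * n) * a₀ ^ 9 - 96 * p ^ (3 * n) * B₀ * a₀ ^ 6 + 48 * p ^ n * B₀ ^ 2 * a₀ ^ 3)
      + 2 ^ 6 * B₀ ^ 3) := by
    unfold phi3; ring
  rw [hpsi, hphi, mul_dvd_mul_iff_left (pow_ne_zero _ hp.ne_zero)]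
  intro hdvd
  have hp_dvd : p ∣ 2 ^ 6 * B₀ ^ 3 :=
    (dvd_add_right (dvd_mul_of_dvd_left (dvd_pow_self p hn) _)).mp
      ((dvd_mul_of_dvd_left (dvd_pow_self p hn) _).trans hdvd)
  rcases hp.dvd_or_dvd hp_dvd with h2 | hB
  · exact hp2 (hp.dvd_of_dvd_pow h2)
  · exact hB₀ (hp.dvd_of_dvd_pow hB)

end Valuation

open WeierstrassCurve.Affine

lemma equation_iff {B x y : ℚ} : (Mordell B).Equation x y ↔ y ^ 2 = x ^ 3 + B := by
  rw [WeierstrassCurve.Affine.equation_iff]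
  simp [Mordell]

lemma x_three_smul {B a b x y : ℚ} {h : (Mordell B).Nonsingular a b}
    {h' : (Mordell B).Nonsingular x y} (hb : b ≠ 0)
    (h3 : (3 : ℤ) • Point.some _ _ h = .some _ _ h') :
    x * psi3 a B ^ 2 = phi3 a B := by
  -- `B` is determined by the point, so the formula becomes an identity of rational functions.
  obtain rfl : B = b ^ 2 - a ^ 3 := by linear_combination -(equation_iff.mp h.1)
  have hy : b ≠ (Mordell (b ^ 2 - a ^ 3)).negY a b := by
    simp only [Mordell, negY]
    contrapose! hb
    linarith
  have h2 := Point.add_self_of_Y_ne (h₁ := h) hy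
  have hL : (Mordell (b ^ 2 - a ^ 3)).slope a a b b = 3 * a ^ 2 / (2 * b) := by
    rw [slope_of_Y_ne rfl hy]
    simp only [Mordell, negY]
    ring
  rw [show (3 : ℤ) • Point.some _ _ h = Point.some _ _ h + Point.some _ _ h + Point.some _ _ h by
    abel, h2] at h3
  by_cases hx : (Mordell (b ^ 2 - a ^ 3)).addX a a ((Mordell (b ^ 2 - a ^ 3)).slope a a b b) = a
  · exfalso
    rcases Point.X_eq_iff.mp hx with h2P | h2P
    · exact Point.some_ne_zero h (add_eq_left.mp (h2.trans h2P))
    · rw [h2P, neg_add_cancel] at h3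
      exact Point.some_ne_zero h' h3.symm
  rw [Point.add_of_X_ne hx, Point.some.injEq] at h3
  rw [← h3.1, slope_of_X_ne hx, hL]
  rw [hL] at hx
  simp only [Mordell, addX, addY, negAddY, negY] at hx ⊢
  field_simp at hx ⊢
  unfold psi3 phi3
  ring

end Mordell

open Mordell

lemma exists_eq_pow_padicValInt_mul_not_dvd {p : ℕ} [Fact p.Prime] {B : ℤ} (hB : B ≠ 0) :
    ∃ B₀, B = p ^ padicValInt p B * B₀ ∧ ¬ (p : ℤ) ∣ B₀ := by
  set v := padicValInt p B
  obtain ⟨B₀, hB₀⟩ := padicValInt_dvd (p := p) B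
  refine ⟨B₀, hB₀, fun ⟨c, hc⟩ => ?_⟩
  have : (p : ℤ) ^ (v + 1) ∣ B := ⟨c, by rw [hB₀, hc]; ring⟩
  rcases (padicValInt_dvd_iff _ B).mp this with h0 | hle
  · exact hB h0
  · omega

lemma Rat.intCast_dvd_of_mul_eq {x : ℚ} {m k : ℤ} (hx : x.den = 1) (h : x * m = k) : m ∣ k :=
  ⟨x.num, by rw [← Rat.coe_int_num_of_den_eq_one hx] at h; exact_mod_cast h.symm.trans (mul_comm _ _)⟩

theorem stmt_13_general (B a b : ℤ) (hB : B ≠ 0)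
    (h : (Mordell B).Nonsingular (a : ℚ) (b : ℚ))
    (h3 : IsIntegralPoint ((3 : ℤ) • WeierstrassCurve.Affine.Point.some _ _ h))
    (p : ℕ) (hp : p.Prime) (hp3 : 3 < p) (hpB : (p : ℤ) ∣ B) :
    padicValInt p a < padicValInt p B := by
  have : Fact p.Prime := ⟨hp⟩
  by_contra! hle
  obtain ⟨B₀, hB_eq, hB₀⟩ := exists_eq_pow_padicValInt_mul_not_dvd (p := p) hB
  set n := padicValInt p B
  obtain ⟨a₀, ha_eq⟩ := (pow_dvd_pow (p : ℤ) hle).trans (padicValInt_dvd a)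
  have hn : n ≠ 0 := fun h0 => hB₀ (by rwa [hB_eq, h0, pow_zero, one_mul] at hpB)
  have hp' : Prime (p : ℤ) := Nat.prime_iff_prime_int.mp hp
  have hp2 : ¬ (p : ℤ) ∣ 2 := fun h2 => by have := Int.le_of_dvd two_pos h2; omega
  have hb : b ≠ 0 := by
    rintro rfl
    have hE := equation_iff.mp h.1
    push_cast at hE
    refine pow_mul_cube_add_pow_mul_ne_zero hp' hn hB₀ (a₀ := a₀) ?_
    rw [← ha_eq, ← hB_eq]
    exact_mod_cast (by linear_combination -hE : (a : ℚ) ^ 3 + B = 0)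
  obtain ⟨x, y, h', h3P, hx, -⟩ := h3
  have hdvd : psi3 a B ^ 2 ∣ phi3 a B :=
    Rat.intCast_dvd_of_mul_eq hx (by exact_mod_cast x_three_smul (by exact_mod_cast hb) h3P)
  rw [ha_eq, hB_eq] at hdvd
  exact not_psi3_sq_dvd_phi3 hp' hp2 hn hB₀ hdvd

theorem stmt_13 (B a b : ℤ) (hB : B ≠ 0) (hB6 : SixthPowerFree B)
    (h : (Mordell B).Nonsingular (a : ℚ) (b : ℚ))
    (htor : ∀ n : ℤ, n ≠ 0 → n • WeierstrassCurve.Affine.Point.some _ _ h ≠ 0)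
    (h3 : IsIntegralPoint ((3 : ℤ) • WeierstrassCurve.Affine.Point.some _ _ h))
    (p : ℕ) (hp : p.Prime) (hp3 : 3 < p) (hpB : (p : ℤ) ∣ B) (hpa : (p : ℤ) ∣ a) :
    padicValInt p a < padicValInt p B :=
  stmt_13_general B a b hB h h3 p hp hp3 hpB
end
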